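/- Let N ≥ 1 and fix R₀ > 0. Let (ε_n) be positive reals with ε_n → 0, let (y_n) ⊂ ℝ^N with ε_n·y_n → z for some z ∈ ℝ^N with |z| ≤ R₀, and let (u_n) ⊂ L²(ℝ^N) be such that the translates v_n := u_n(· + y_n) converge in L²(ℝ^N) to some v ≠ 0. Then Q_{ε_n}(u_n) → χ(z) = z in ℝ^N. -/

import Mathlib

/-!
Translating by `y_n`, `Q_{ε_n}(u_n)` becomes the ratio of the integrals of `v_n²` against the
weights `g(ε_n(x + y_n))` and `g(ε_n(x + y_n)) χ(ε_n(x + y_n))`. These weights are bounded and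
converge pointwise to `g(z)` and `g(z) z`, while `v_n² → v²` in `L¹`; so numerator and
denominator tend to `g(z) z ∫ v²` and `g(z) ∫ v² > 0`.
-/

open MeasureTheory Filter Topology

/-- The truncation map `χ(x) = x` if `|x| ≤ R₀`, `χ(x) = R₀·x/|x|` if `|x| > R₀`. -/
noncomputable def chi {N : ℕ} (R₀ : ℝ) (x : EuclideanSpace ℝ (Fin N)) :
    EuclideanSpace ℝ (Fin N) :=
  if ‖x‖ ≤ R₀ then x else (R₀ / ‖x‖) • x

/-- The barycenter-type map
`Q_ε(u) = (∫ χ(εx)·g(εx)·u(x)² dx) / (∫ g(εx)·u(x)² dx)`. -/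
noncomputable def Qeps {N : ℕ} (R₀ : ℝ) (g : EuclideanSpace ℝ (Fin N) → ℝ) (ε : ℝ)
    (u : EuclideanSpace ℝ (Fin N) → ℝ) : EuclideanSpace ℝ (Fin N) :=
  (∫ x, g (ε • x) * (u x) ^ 2)⁻¹ • ∫ x, (g (ε • x) * (u x) ^ 2) • chi R₀ (ε • x)

section Chi

variable {N : ℕ} {R₀ : ℝ}

lemma chi_of_norm_le {x : EuclideanSpace ℝ (Fin N)} (hx : ‖x‖ ≤ R₀) : chi R₀ x = x :=
  if_pos hx

lemma chi_eq_smul (hR₀ : 0 < R₀) (x : EuclideanSpace ℝ (Fin N)) :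
    chi R₀ x = (R₀ / max R₀ ‖x‖) • x := by
  unfold chi
  split_ifs with h
  · rw [max_eq_left h, div_self hR₀.ne', one_smul]
  · rw [max_eq_right (le_of_not_ge h)]

lemma continuous_chi (hR₀ : 0 < R₀) : Continuous (chi (N := N) R₀) := by
  rw [funext (chi_eq_smul hR₀)]
  exact (continuous_const.div (continuous_const.max continuous_norm)
    fun x => (hR₀.trans_le (le_max_left _ _)).ne').smul continuous_id

lemma norm_chi_le (hR₀ : 0 < R₀) (x : EuclideanSpace ℝ (Fin N)) : ‖chi R₀ x‖ ≤ R₀ := by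
  have hmax : 0 < max R₀ ‖x‖ := hR₀.trans_le (le_max_left _ _)
  rw [chi_eq_smul hR₀, norm_smul, Real.norm_of_nonneg (div_nonneg hR₀.le hmax.le)]
  calc R₀ / max R₀ ‖x‖ * ‖x‖ ≤ R₀ / max R₀ ‖x‖ * max R₀ ‖x‖ := by gcongr; exact le_max_right _ _
    _ = R₀ := div_mul_cancel₀ _ hmax.ne'

end Chi

section L2

variable {α : Type*} [MeasurableSpace α] {μ : Measure α}

lemma integral_abs_mul_le_sqrt_mul_sqrt {f h : α → ℝ} (hf : MemLp f 2 μ) (hh : MemLp h 2 μ) :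
    ∫ a, |f a * h a| ∂μ ≤ √(∫ a, f a ^ 2 ∂μ) * √(∫ a, h a ^ 2 ∂μ) := by
  have h2 : ENNReal.ofReal 2 = 2 := by norm_num
  have key := integral_mul_norm_le_Lp_mul_Lq (μ := μ) Real.HolderConjugate.two_two
    (h2 ▸ hf) (h2 ▸ hh)
  simp only [Real.norm_eq_abs, ← abs_mul, Real.rpow_two, sq_abs, ← Real.sqrt_eq_rpow] at key
  exact key

lemma integral_sq_pos {v : α → ℝ} (hv : MemLp v 2 μ) (hne : ¬ v =ᵐ[μ] 0) :
    0 < ∫ x, v x ^ 2 ∂μ := by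
  refine (integral_nonneg fun x => sq_nonneg (v x)).lt_of_ne fun h => hne ?_
  filter_upwards [(integral_eq_zero_iff_of_nonneg (fun x => sq_nonneg (v x))
    hv.integrable_sq).mp h.symm] with x hx
  exact pow_eq_zero_iff two_ne_zero |>.mp hx

theorem tendsto_integral_abs_sq_sub_sq {f : ℕ → α → ℝ} {v : α → ℝ} (hf : ∀ n, MemLp (f n) 2 μ)
    (hv : MemLp v 2 μ) (hfv : Tendsto (fun n => ∫ x, (f n x - v x) ^ 2 ∂μ) atTop (𝓝 0)) :
    Tendsto (fun n => ∫ x, |f n x ^ 2 - v x ^ 2| ∂μ) atTop (𝓝 0) := by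
  have hw : ∀ n, MemLp (fun x => f n x - v x) 2 μ := fun n => (hf n).sub hv
  have hvw : ∀ n, Integrable (fun x => v x * (f n x - v x)) μ := fun n =>
    memLp_one_iff_integrable.mp ((hw n).smul hv (r := 1))
  refine squeeze_zero (fun n => integral_nonneg fun x => abs_nonneg _) (fun n => ?_)
    (g := fun n => ∫ x, (f n x - v x) ^ 2 ∂μ
      + 2 * (√(∫ x, v x ^ 2 ∂μ) * √(∫ x, (f n x - v x) ^ 2 ∂μ))) ?_
  · have hpt : ∀ x, |f n x ^ 2 - v x ^ 2| ≤ (f n x - v x) ^ 2 + 2 * |v x * (f n x - v x)| := by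
      intro x
      calc |f n x ^ 2 - v x ^ 2| = |(f n x - v x) ^ 2 + 2 * (v x * (f n x - v x))| := by ring_nf
        _ ≤ _ := by
          refine (abs_add_le _ _).trans ?_
          rw [abs_of_nonneg (sq_nonneg _), abs_mul, abs_two]
    have hdom := (hw n).integrable_sq.add ((hvw n).abs.const_mul 2)
    calc ∫ x, |f n x ^ 2 - v x ^ 2| ∂μ
        ≤ ∫ x, (f n x - v x) ^ 2 + 2 * |v x * (f n x - v x)| ∂μ :=
          integral_mono_of_nonneg (Eventually.of_forall fun x => abs_nonneg _) hdom
            (Eventually.of_forall hpt)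
      _ = ∫ x, (f n x - v x) ^ 2 ∂μ + 2 * ∫ x, |v x * (f n x - v x)| ∂μ := by
          rw [integral_add (hw n).integrable_sq ((hvw n).abs.const_mul 2), integral_const_mul]
      _ ≤ _ := by gcongr; exact integral_abs_mul_le_sqrt_mul_sqrt hv (hw n)
  · simpa using hfv.add ((hfv.sqrt.const_mul √(∫ x, v x ^ 2 ∂μ)).const_mul 2)

end L2

section Dominated

variable {α E : Type*} [MeasurableSpace α] {μ : Measure α}
  [NormedAddCommGroup E] [NormedSpace ℝ E] [CompleteSpace E]

theorem tendsto_integral_smul_of_tendsto_L1 {f : ℕ → α → ℝ} {F : α → ℝ}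
    (hf : ∀ n, Integrable (f n) μ) (hF : Integrable F μ)
    (hfF : Tendsto (fun n => ∫ x, |f n x - F x| ∂μ) atTop (𝓝 0))
    {h : ℕ → α → E} {C : ℝ} (hmeas : ∀ n, AEStronglyMeasurable (h n) μ)
    (hC : ∀ n x, ‖h n x‖ ≤ C) {L : E} (hlim : ∀ᵐ x ∂μ, Tendsto (fun n => h n x) atTop (𝓝 L)) :
    Tendsto (fun n => ∫ x, f n x • h n x ∂μ) atTop (𝓝 ((∫ x, F x ∂μ) • L)) := by
  have hbound : ∀ (a : α → ℝ) n x, ‖a x • h n x‖ ≤ C * |a x| := fun a n x => by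
    rw [norm_smul, Real.norm_eq_abs, mul_comm]
    exact mul_le_mul_of_nonneg_right (hC n x) (abs_nonneg _)
  have hint : ∀ {a : α → ℝ}, Integrable a μ → ∀ n, Integrable (fun x => a x • h n x) μ :=
    fun ha n => (ha.abs.const_mul C).mono' (ha.aestronglyMeasurable.smul (hmeas n))
      (Eventually.of_forall (hbound _ n))
  have hlimF : Tendsto (fun n => ∫ x, F x • h n x ∂μ) atTop (𝓝 ((∫ x, F x ∂μ) • L)) := by
    rw [← integral_smul_const]
    exact tendsto_integral_of_dominated_convergence (fun x => C * |F x|)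
      (fun n => hF.aestronglyMeasurable.smul (hmeas n)) (hF.abs.const_mul C)
      (fun n => Eventually.of_forall (hbound F n))
      (hlim.mono fun x hx => hx.const_smul (F x))
  have hdiff : Tendsto (fun n => ∫ x, f n x • h n x ∂μ - ∫ x, F x • h n x ∂μ) atTop (𝓝 0) := by
    refine squeeze_zero_norm (fun n => ?_) (by simpa using hfF.const_mul C)
    rw [← integral_sub (hint (hf n) n) (hint hF n), ← integral_const_mul]
    refine norm_integral_le_of_norm_le (((hf n).sub hF).abs.const_mul C)
      (Eventually.of_forall fun x => ?_)
    simpa only [← sub_smul] using hbound (fun x => f n x - F x) n x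
  simpa using hdiff.add hlimF

end Dominated

lemma Qeps_eq_integral_translate {N : ℕ} (R₀ : ℝ) (g : EuclideanSpace ℝ (Fin N) → ℝ) (ε : ℝ)
    (u : EuclideanSpace ℝ (Fin N) → ℝ) (y : EuclideanSpace ℝ (Fin N)) :
    Qeps R₀ g ε u = (∫ x, u (x + y) ^ 2 • g (ε • (x + y)))⁻¹ •
      ∫ x, u (x + y) ^ 2 • (g (ε • (x + y)) • chi R₀ (ε • (x + y))) := by
  unfold Qeps
  rw [← integral_add_right_eq_self _ y,
    ← integral_add_right_eq_self (fun x => (g (ε • x) * u x ^ 2) • chi R₀ (ε • x)) y]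
  simp only [smul_eq_mul, mul_comm, mul_smul]

theorem Qeps_tendsto_of_translates_general (N : ℕ) (R₀ : ℝ) (hR₀ : 0 < R₀)
    (g : EuclideanSpace ℝ (Fin N) → ℝ) (hg : Continuous g) (hgpos : ∀ x, 0 < g x)
    (hg0 : Tendsto g (cocompact _) (nhds 0))
    (ε : ℕ → ℝ) (hε0 : Tendsto ε atTop (nhds 0))
    (y : ℕ → EuclideanSpace ℝ (Fin N)) (z : EuclideanSpace ℝ (Fin N))
    (hz : ‖z‖ ≤ R₀) (hyz : Tendsto (fun n => ε n • y n) atTop (nhds z))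
    (u : ℕ → EuclideanSpace ℝ (Fin N) → ℝ) (hun : ∀ n, MemLp (u n) 2 volume)
    (v : EuclideanSpace ℝ (Fin N) → ℝ) (hv : MemLp v 2 volume)
    (hvne : ¬ v =ᵐ[volume] 0)
    (hconv : Tendsto (fun n => ∫ x, (u n (x + y n) - v x) ^ 2) atTop (nhds 0)) :
    Tendsto (fun n => Qeps R₀ g (ε n) (u n)) atTop (nhds z) := by
  let G : ZeroAtInftyContinuousMap (EuclideanSpace ℝ (Fin N)) ℝ := ⟨⟨g, hg⟩, hg0⟩
  have hgb : ∀ x, ‖g x‖ ≤ ‖G.toBCF‖ := G.toBCF.norm_coe_le_norm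
  have hvn : ∀ n, MemLp (fun x => u n (x + y n)) 2 volume := fun n =>
    (hun n).comp_measurePreserving (measurePreserving_add_right volume (y n))
  have hL1 := tendsto_integral_abs_sq_sub_sq hvn hv hconv
  have hθ : ∀ x, Tendsto (fun n => ε n • (x + y n)) atTop (𝓝 z) := fun x => by
    simpa [smul_add] using (hε0.smul_const x).add hyz
  have hθcont : ∀ n, Continuous fun x : EuclideanSpace ℝ (Fin N) => ε n • (x + y n) :=
    fun n => by fun_prop
  have hden := tendsto_integral_smul_of_tendsto_L1 (fun n => (hvn n).integrable_sq)
    hv.integrable_sq hL1 (fun n => (hg.comp (hθcont n)).aestronglyMeasurable)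
    (fun n x => hgb _) (Eventually.of_forall fun x => (hg.tendsto z).comp (hθ x))
  have hnum := tendsto_integral_smul_of_tendsto_L1 (fun n => (hvn n).integrable_sq)
    hv.integrable_sq hL1
    (fun n =>
      ((hg.comp (hθcont n)).smul ((continuous_chi hR₀).comp (hθcont n))).aestronglyMeasurable)
    (fun n x => (norm_smul_le _ _).trans (mul_le_mul (hgb _) (norm_chi_le hR₀ _)
      (norm_nonneg _) (norm_nonneg _)))
    (Eventually.of_forall fun x =>
      ((hg.tendsto z).comp (hθ x)).smul (((continuous_chi hR₀).tendsto z).comp (hθ x)))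
  have hc : (∫ x, v x ^ 2) • g z ≠ 0 := (mul_pos (integral_sq_pos hv hvne) (hgpos z)).ne'
  have hval : ((∫ x, v x ^ 2) • g z)⁻¹ • ((∫ x, v x ^ 2) • (g z • chi R₀ z)) = z := by
    rw [chi_of_norm_le hz, smul_smul _ (g z), ← smul_eq_mul, smul_smul, inv_mul_cancel₀ hc,
      one_smul]
  have hlim := (hden.inv₀ hc).smul hnum
  rw [hval] at hlim
  exact hlim.congr fun n => (Qeps_eq_integral_translate R₀ g (ε n) (u n) (y n)).symm

/-- Fix `R₀ > 0` and `g` continuous, positive, vanishing at infinity. Let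
`ε_n → 0` with `ε_n > 0`, let `(y_n) ⊂ ℝ^N` with `ε_n·y_n → z` where `|z| ≤ R₀`, and let
`(u_n) ⊂ L²(ℝ^N)` be such that the translates `v_n := u_n(· + y_n)` converge in `L²(ℝ^N)`
to some `v ≠ 0`. Then `Q_{ε_n}(u_n) → χ(z) = z`. -/
theorem Qeps_tendsto_of_translates (N : ℕ) (hN : 1 ≤ N) (R₀ : ℝ) (hR₀ : 0 < R₀)
    (g : EuclideanSpace ℝ (Fin N) → ℝ) (hg : Continuous g) (hgpos : ∀ x, 0 < g x)
    (hg0 : Tendsto g (cocompact _) (nhds 0))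
    (ε : ℕ → ℝ) (hεpos : ∀ n, 0 < ε n) (hε0 : Tendsto ε atTop (nhds 0))
    (y : ℕ → EuclideanSpace ℝ (Fin N)) (z : EuclideanSpace ℝ (Fin N))
    (hz : ‖z‖ ≤ R₀) (hyz : Tendsto (fun n => ε n • y n) atTop (nhds z))
    (u : ℕ → EuclideanSpace ℝ (Fin N) → ℝ) (hun : ∀ n, MemLp (u n) 2 volume)
    (v : EuclideanSpace ℝ (Fin N) → ℝ) (hv : MemLp v 2 volume)
    (hvne : ¬ v =ᵐ[volume] 0)
    (hconv : Tendsto (fun n => ∫ x, (u n (x + y n) - v x) ^ 2) atTop (nhds 0)) :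
    Tendsto (fun n => Qeps R₀ g (ε n) (u n)) atTop (nhds z) :=
  Qeps_tendsto_of_translates_general N R₀ hR₀ g hg hgpos hg0 ε hε0 y z hz hyz u hun v hv hvne hconv
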